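/- arXiv:2208.08526 — 5 statements merged into one kernel-verified Lean document; each statement's English description precedes it below -/
import Mathlib

section
/- Let H: ℂ → ℂ be k-Lipschitz with 0 ≤ k < 1, let F(z) = conj(z) + H(z), and define G: ℝ² ≅ ℂ → ℂ ≅ ℝ² by G(A) = conj(F⁻¹(A)) − H(F⁻¹(A)). Then G is uniformly monotone: (G(A) − G(A')) · (A − A') ≥ λ |A − A'|² for all A, A' ∈ ℝ², with λ = (1−k)/(1+k), where · denotes the real inner product on ℝ² ≅ ℂ. -/
theorem uniformly_monotone_G
    (k : ℝ) (hk0 : 0 ≤ k) (hk1 : k < 1) (H : ℂ → ℂ)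
    (hH : ∀ z z', ‖H z - H z'‖ ≤ k * ‖z - z'‖)
    (F : ℂ → ℂ) (hF : ∀ z, F z = starRingEnd ℂ z + H z)
    (G : ℂ → ℂ)
    (hG : ∀ A, G A = starRingEnd ℂ (Function.invFun F A) - H (Function.invFun F A)) :
    ∀ A A' : ℂ,
      ((G A - G A') * starRingEnd ℂ (A - A')).re
        ≥ (1 - k) / (1 + k) * ‖A - A'‖ ^ 2 := by
  -- F is surjective
  have hsurj : Function.Surjective F := by
    intro A
    set T : ℂ → ℂ := fun z => starRingEnd ℂ (A - H z) with hT
    have hlip : LipschitzWith ⟨k, hk0⟩ T := by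
      apply LipschitzWith.of_dist_le_mul
      intro x y
      simp only [hT, Complex.dist_eq]
      have : starRingEnd ℂ (A - H x) - starRingEnd ℂ (A - H y)
          = starRingEnd ℂ (H y - H x) := by ring_nf; rw [← map_sub]; ring_nf
      rw [this, Complex.norm_conj]
      calc ‖H y - H x‖ ≤ k * ‖y - x‖ := hH y x
        _ = (⟨k, hk0⟩ : NNReal) * ‖x - y‖ := by
            rw [norm_sub_rev y x]
    have hcontr : ContractingWith ⟨k, hk0⟩ T := ⟨by exact_mod_cast hk1, hlip⟩
    refine ⟨hcontr.fixedPoint T, ?_⟩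
    have hfix : T (hcontr.fixedPoint T) = hcontr.fixedPoint T :=
      hcontr.fixedPoint_isFixedPt
    set z := hcontr.fixedPoint T
    have : starRingEnd ℂ (A - H z) = z := hfix
    rw [hF z]
    have := congrArg (starRingEnd ℂ) this
    rw [Complex.conj_conj] at this
    linear_combination -this
  intro A A'
  have hz : F (Function.invFun F A) = A := Function.invFun_eq (hsurj A)
  have hz' : F (Function.invFun F A') = A' := Function.invFun_eq (hsurj A')
  set z := Function.invFun F A
  set z' := Function.invFun F A'
  set u := starRingEnd ℂ (z - z') with hu
  set h := H z - H z' with hh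
  have hAA : A - A' = u + h := by
    rw [← hz, ← hz', hF z, hF z', hu, hh, map_sub]; ring
  have hGG : G A - G A' = u - h := by
    rw [hG A, hG A', hu, hh, map_sub]; ring
  rw [hGG, hAA]
  have key : ((u - h) * starRingEnd ℂ (u + h)).re
      = ‖u‖ ^ 2 - ‖h‖ ^ 2 := by
    rw [Complex.sq_norm, Complex.sq_norm]
    simp [Complex.mul_re, Complex.normSq_apply]
    ring
  rw [key]
  set d := ‖z - z'‖ with hd
  have hud : ‖u‖ = d := Complex.norm_conj _
  have hhd : ‖h‖ ≤ k * d := hH z z'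
  have hd0 : 0 ≤ d := norm_nonneg _
  have hh0 : 0 ≤ ‖h‖ := norm_nonneg _
  have hA0 : ‖u + h‖ ≤ (1 + k) * d := by
    calc ‖u + h‖ ≤ ‖u‖ + ‖h‖ := norm_add_le _ _
      _ ≤ d + k * d := by rw [hud]; linarith
      _ = (1 + k) * d := by ring
  have hk1' : (0:ℝ) < 1 + k := by linarith
  have hAb0 : 0 ≤ ‖u + h‖ := norm_nonneg _
  have h1 : (1 - k) / (1 + k) * ‖u + h‖ ^ 2
      ≤ (1 - k) / (1 + k) * ((1 + k) * d) ^ 2 := by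
    apply mul_le_mul_of_nonneg_left _ (div_nonneg (by linarith) (by linarith))
    exact pow_le_pow_left₀ hAb0 hA0 2
  have h2 : (1 - k) / (1 + k) * ((1 + k) * d) ^ 2 = (1 - k) * (1 + k) * d ^ 2 := by
    field_simp
  have h3 : ‖h‖ ^ 2 ≤ (k * d) ^ 2 := pow_le_pow_left₀ hh0 hhd 2
  rw [hud]
  nlinarith [h1, h2, h3]
end

section
/- Let γ: ℝ → ℝ^{2×2} be a differentiable curve such that γ'(t) is invertible for every t, and let θ: B → ℝ be differentiable on an open connected set B ⊂ ℝ². If u: B → ℝ² is C² with Du(x) = γ(θ(x)) for all x ∈ B, then θ is constant on B (equivalently, Du is constant). -/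
open Topology
theorem rigidity_exact_inclusion
    (γ : ℝ → Fin 2 → Fin 2 → ℝ) (hγ : Differentiable ℝ γ)
    (hγ' : ∀ t, (Matrix.of (deriv γ t)).det ≠ 0)
    (B : Set (Fin 2 → ℝ)) (hB : IsOpen B) (hBconn : IsConnected B)
    (θ : (Fin 2 → ℝ) → ℝ) (hθ : DifferentiableOn ℝ θ B)
    (u : (Fin 2 → ℝ) → (Fin 2 → ℝ)) (hu : ContDiffOn ℝ 2 u B)
    (hDu : ∀ x ∈ B, ∀ i j : Fin 2,
      fderiv ℝ u x (Pi.single j 1) i = γ (θ x) i j) :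
    ∀ x ∈ B, ∀ y ∈ B, θ x = θ y := by
  -- Step 1: the derivative of θ vanishes on B
  have key : ∀ x ∈ B, fderiv ℝ θ x = 0 := by
    intro x hx
    have hxB : B ∈ 𝓝 x := hB.mem_nhds hx
    have hθx : DifferentiableAt ℝ θ x := (hθ x hx).differentiableAt hxB
    have hu2 : ContDiffAt ℝ 2 u x := hu.contDiffAt hxB
    have hsymm : IsSymmSndFDerivAt ℝ u x := hu2.isSymmSndFDerivAt (by simp [minSmoothness_of_isRCLikeNormedField])
    have hF : DifferentiableAt ℝ (fderiv ℝ u) x :=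
      (hu2.fderiv_right (m := 1) (by norm_num)).differentiableAt one_ne_zero
    set H := fderiv ℝ (fderiv ℝ u) x with hH
    have hdir : ∀ j k i : Fin 2,
        H (Pi.single k 1) (Pi.single j 1) i
          = deriv γ (θ x) i j * fderiv ℝ θ x (Pi.single k 1) := by
      intro j k i
      set L : ((Fin 2 → ℝ) →L[ℝ] (Fin 2 → ℝ)) →L[ℝ] ℝ :=
        (ContinuousLinearMap.proj i).comp
          (ContinuousLinearMap.apply ℝ (Fin 2 → ℝ) (Pi.single j 1)) with hL
      have h1 : HasFDerivAt (fun y => fderiv ℝ u y (Pi.single j 1) i)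
          (L.comp H) x := L.hasFDerivAt.comp x hF.hasFDerivAt
      have heq : (fun y => fderiv ℝ u y (Pi.single j 1) i)
          =ᶠ[𝓝 x] (fun y => γ (θ y) i j) := by
        filter_upwards [hxB] with y hy
        exact hDu y hy i j
      have h2 : HasFDerivAt (fun y => γ (θ y) i j) (L.comp H) x :=
        h1.congr_of_eventuallyEq heq.symm
      have hg : HasDerivAt (fun t => γ t i j) (deriv γ (θ x) i j) (θ x) := by
        have := (hγ (θ x)).hasDerivAt
        have h3 := ((ContinuousLinearMap.proj (R := ℝ) (φ := fun _ : Fin 2 => ℝ) j).comp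
            (ContinuousLinearMap.proj (R := ℝ) (φ := fun _ : Fin 2 => Fin 2 → ℝ) i)
            ).hasFDerivAt.comp_hasDerivAt (θ x) this
        exact h3
      have h4 : HasFDerivAt (fun y => γ (θ y) i j)
          (deriv γ (θ x) i j • fderiv ℝ θ x) x :=
        hg.comp_hasFDerivAt x hθx.hasFDerivAt
      have h5 := h2.unique h4
      have := congrFun (congrArg DFunLike.coe h5) (Pi.single k 1)
      simpa [hL, ContinuousLinearMap.apply] using this
    set a := fderiv ℝ θ x (Pi.single (0 : Fin 2) 1) with ha
    set b := fderiv ℝ θ x (Pi.single (1 : Fin 2) 1) with hb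
    have hMi : ∀ i : Fin 2, deriv γ (θ x) i 0 * b = deriv γ (θ x) i 1 * a := by
      intro i
      have h01 := hdir 0 1 i
      have h10 := hdir 1 0 i
      have hs := congrFun (hsymm.eq (Pi.single (1 : Fin 2) 1) (Pi.single (0 : Fin 2) 1)) i
      rw [h01, h10] at hs
      exact hs
    have hv : (Matrix.of (deriv γ (θ x))).mulVec ![b, -a] = 0 := by
      funext i
      have := hMi i
      simp [Matrix.mulVec, dotProduct, Fin.sum_univ_two, Matrix.of_apply]
      linarith
    have hv0 : (![b, -a] : Fin 2 → ℝ) = 0 :=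
      Matrix.eq_zero_of_mulVec_eq_zero (hγ' (θ x)) hv
    have hb0 : b = 0 := by simpa using congrFun hv0 0
    have ha0 : a = 0 := by have := congrFun hv0 1; simp at this; linarith
    ext w
    have hw : w = w 0 • (Pi.single (0 : Fin 2) (1:ℝ) : Fin 2 → ℝ) + w 1 • (Pi.single (1 : Fin 2) (1:ℝ) : Fin 2 → ℝ) := by
      ext z; fin_cases z <;> simp [Pi.single_apply]
    rw [hw]
    simp only [map_add, map_smul, ← ha, ← hb, ha0, hb0]
    simp
  -- Step 2: θ is locally constant on B
  have hloc : ∀ y ∈ B, ∃ ε > 0, Metric.ball y ε ⊆ B ∧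
      ∀ z ∈ Metric.ball y ε, θ z = θ y := by
    intro y hy
    obtain ⟨ε, hε, hball⟩ := Metric.isOpen_iff.1 hB y hy
    refine ⟨ε, hε, hball, fun z hz => ?_⟩
    refine (convex_ball y ε).is_const_of_fderivWithin_eq_zero
      (hθ.mono hball) (fun w hw => ?_) hz (Metric.mem_ball_self hε)
    rw [fderivWithin_of_isOpen Metric.isOpen_ball hw]
    exact key w (hball hw)
  -- Step 3: connectedness
  intro x hx y hy
  set U := {z | z ∈ B ∧ θ z = θ x} with hU
  set V := {z | z ∈ B ∧ θ z ≠ θ x} with hV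
  have hUopen : IsOpen U := by
    rw [Metric.isOpen_iff]
    rintro z ⟨hzB, hzθ⟩
    obtain ⟨ε, hε, hball, hconst⟩ := hloc z hzB
    exact ⟨ε, hε, fun w hw => ⟨hball hw, (hconst w hw).trans hzθ⟩⟩
  have hVopen : IsOpen V := by
    have : V = B ∩ θ ⁻¹' ({θ x}ᶜ) := by
      ext z; simp [hV, Set.mem_setOf_eq]
    rw [this]
    exact (hθ.continuousOn).isOpen_inter_preimage hB (isOpen_compl_singleton)
  have hdisj : Disjoint U V := by
    rw [Set.disjoint_left]
    rintro z ⟨_, hz1⟩ ⟨_, hz2⟩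
    exact hz2 hz1
  have hcover : B ⊆ U ∪ V := fun z hz => by
    by_cases h : θ z = θ x
    · exact Or.inl ⟨hz, h⟩
    · exact Or.inr ⟨hz, h⟩
  have hsub : B ⊆ U :=
    hBconn.isPreconnected.subset_left_of_subset_union hUopen hVopen hdisj hcover
      ⟨x, hx, hx, rfl⟩
  exact ((hsub hy).2).symm
end

section
/- Let r > 0 and θ, θ' ∈ ℝ with θ ≢ θ' (mod 2π). Suppose sin((θ+θ')/2) cos((θ+θ')/2) sin²((θ−θ')/2) = 0 and sin(3(θ−θ')) sin(4(θ−θ')) cos(3(θ+θ') − 6θ_a) cos(4(θ+θ') − 8θ_a) = 0, where θ_a ∉ (π/48)ℤ. Then θ + θ' ∈ πℤ and θ − θ' ∈ (π/3)ℤ ∪ (π/4)ℤ. -/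
open Real

theorem step1_conclusion (r θa θ θ' : ℝ) (hr : 0 < r)
    (hθa : ∀ n : ℤ, θa ≠ n * (π / 48))
    (hne : ∀ n : ℤ, θ - θ' ≠ n * (2 * π))
    (h1 : sin ((θ + θ') / 2) * cos ((θ + θ') / 2) * sin ((θ - θ') / 2) ^ 2 = 0)
    (h2 : sin (3 * (θ - θ')) * sin (4 * (θ - θ'))
        * cos (3 * (θ + θ') - 6 * θa) * cos (4 * (θ + θ') - 8 * θa) = 0) :
    (∃ n : ℤ, θ + θ' = n * π) ∧
    ((∃ n : ℤ, θ - θ' = n * (π / 3)) ∨ (∃ n : ℤ, θ - θ' = n * (π / 4))) := by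
  have hpi := Real.pi_pos
  have hs : sin ((θ - θ') / 2) ≠ 0 := by
    intro h
    obtain ⟨n, hn⟩ := Real.sin_eq_zero_iff.1 h
    exact hne n (by linarith)
  have hsc : sin ((θ + θ') / 2) * cos ((θ + θ') / 2) = 0 := by
    rcases mul_eq_zero.1 h1 with h | h
    · exact h
    · exact absurd (pow_eq_zero_iff (n := 2) (by norm_num) |>.1 h) hs
  have hsum : sin (θ + θ') = 0 := by
    have := Real.sin_two_mul ((θ + θ') / 2)
    rw [show 2 * ((θ + θ') / 2) = θ + θ' by ring] at this
    rw [this, mul_assoc, hsc, mul_zero]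
  obtain ⟨n, hn⟩ := Real.sin_eq_zero_iff.1 hsum
  refine ⟨⟨n, hn.symm⟩, ?_⟩
  have hc3 : cos (3 * (θ + θ') - 6 * θa) ≠ 0 := by
    intro h
    obtain ⟨k, hk⟩ := Real.cos_eq_zero_iff.1 h
    refine hθa (24 * n - 8 * k - 4) ?_
    rw [← hn] at hk
    push_cast at hk ⊢
    linarith
  have hc4 : cos (4 * (θ + θ') - 8 * θa) ≠ 0 := by
    intro h
    obtain ⟨k, hk⟩ := Real.cos_eq_zero_iff.1 h
    refine hθa (24 * n - 6 * k - 3) ?_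
    rw [← hn] at hk
    push_cast at hk ⊢
    linarith
  have h34 : sin (3 * (θ - θ')) * sin (4 * (θ - θ')) = 0 := by
    rcases mul_eq_zero.1 h2 with h | h
    · rcases mul_eq_zero.1 h with h | h
      · exact h
      · exact absurd h hc3
    · exact absurd h hc4
  rcases mul_eq_zero.1 h34 with h | h
  · obtain ⟨m, hm⟩ := Real.sin_eq_zero_iff.1 h
    exact Or.inl ⟨m, by linarith⟩
  · obtain ⟨m, hm⟩ := Real.sin_eq_zero_iff.1 h
    exact Or.inr ⟨m, by linarith⟩
end

section
/- Let Γ: ℝ → ℝ^{3×3} be the curve Γ(θ) with rows (r cos θ, −sin(8θ−8θ_a), s₁(θ)), (sin(6θ−6θ_a), r sin θ, s₂(θ)), (r cos θ, sin(8θ−8θ_a), s₁(θ)), where s₁, s₂ are arbitrary smooth functions, r = √(1+(1+a)²), and θ_a = arctan(1/(1+a)) ∉ (π/48)ℤ. Then rank Γ'(θ) ≥ 2 for every θ, i.e., the curve is elliptic. -/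
open Real

lemma rank_ge_two_of_det_submatrix (M : Matrix (Fin 3) (Fin 3) ℝ) (f g : Fin 2 → Fin 3)
    (h : (M.submatrix f g).det ≠ 0) : 2 ≤ M.rank := by
  have h2 : (M.submatrix f g).rank = 2 := by
    rw [Matrix.rank_of_isUnit _ ((Matrix.isUnit_iff_isUnit_det _).mpr (isUnit_iff_ne_zero.mpr h)),
      Fintype.card_fin]
  have key : M.submatrix f g =
      ((1 : Matrix (Fin 3) (Fin 3) ℝ).submatrix f (Equiv.refl _)) *
        (M * ((1 : Matrix (Fin 3) (Fin 3) ℝ).submatrix (Equiv.refl _) g)) := by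
    rw [Matrix.mul_submatrix_one, Matrix.one_submatrix_mul]
    simp
  calc (2 : ℕ) = (M.submatrix f g).rank := h2.symm
    _ ≤ (M * ((1 : Matrix (Fin 3) (Fin 3) ℝ).submatrix (Equiv.refl _) g)).rank := by
        rw [key]; exact Matrix.rank_mul_le_right _ _
    _ ≤ M.rank := Matrix.rank_mul_le_left _ _

theorem curve_is_elliptic (a : ℝ) (ha : 0 < a)
    (r θa : ℝ) (hr : r = Real.sqrt (1 + (1 + a) ^ 2))
    (hθa : θa = arctan (1 / (1 + a)))
    (hnot : ∀ n : ℤ, θa ≠ n * (π / 48))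
    (s₁ s₂ : ℝ → ℝ) (hs₁ : ContDiff ℝ (⊤ : ℕ∞) s₁) (hs₂ : ContDiff ℝ (⊤ : ℕ∞) s₂)
    (Γ : ℝ → Matrix (Fin 3) (Fin 3) ℝ)
    (hΓ : ∀ θ, Γ θ = !![r * cos θ, -sin (8 * θ - 8 * θa), s₁ θ;
                        sin (6 * θ - 6 * θa), r * sin θ, s₂ θ;
                        r * cos θ, sin (8 * θ - 8 * θa), s₁ θ]) :
    ∀ θ : ℝ, 2 ≤ (Matrix.of fun i j => deriv (fun t => Γ t i j) θ).rank := by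
  intro θ
  set M : Matrix (Fin 3) (Fin 3) ℝ := Matrix.of fun i j => deriv (fun t => Γ t i j) θ with hM
  -- derivative facts
  have h8 : HasDerivAt (fun t : ℝ => 8 * t - 8 * θa) 8 θ := by
    simpa using ((hasDerivAt_id θ).const_mul (8:ℝ)).sub_const (8 * θa)
  have h6 : HasDerivAt (fun t : ℝ => 6 * t - 6 * θa) 6 θ := by
    simpa using ((hasDerivAt_id θ).const_mul (6:ℝ)).sub_const (6 * θa)
  have hsin8 : HasDerivAt (fun t : ℝ => sin (8 * t - 8 * θa))
      (cos (8 * θ - 8 * θa) * 8) θ := (Real.hasDerivAt_sin _).comp θ h8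
  have hsin6 : HasDerivAt (fun t : ℝ => sin (6 * t - 6 * θa))
      (cos (6 * θ - 6 * θa) * 6) θ := (Real.hasDerivAt_sin _).comp θ h6
  have hrc : HasDerivAt (fun t : ℝ => r * cos t) (r * (-sin θ)) θ :=
    (Real.hasDerivAt_cos θ).const_mul r
  have hrs : HasDerivAt (fun t : ℝ => r * sin t) (r * cos θ) θ :=
    (Real.hasDerivAt_sin θ).const_mul r
  -- entries of M
  have e00 : M 0 0 = r * (-sin θ) := by
    rw [hM]
    show deriv (fun t => Γ t 0 0) θ = _
    have : (fun t => Γ t 0 0) = fun t => r * cos t := by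
      funext t; rw [hΓ t]; simp
    rw [this, hrc.deriv]
  have e01 : M 0 1 = -(cos (8 * θ - 8 * θa) * 8) := by
    rw [hM]
    show deriv (fun t => Γ t 0 1) θ = _
    have : (fun t => Γ t 0 1) = fun t => -sin (8 * t - 8 * θa) := by
      funext t; rw [hΓ t]; simp
    rw [this]; exact hsin8.neg.deriv
  have e10 : M 1 0 = cos (6 * θ - 6 * θa) * 6 := by
    rw [hM]
    show deriv (fun t => Γ t 1 0) θ = _
    have : (fun t => Γ t 1 0) = fun t => sin (6 * t - 6 * θa) := by
      funext t; rw [hΓ t]; simp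
    rw [this, hsin6.deriv]
  have e11 : M 1 1 = r * cos θ := by
    rw [hM]
    show deriv (fun t => Γ t 1 1) θ = _
    have : (fun t => Γ t 1 1) = fun t => r * sin t := by
      funext t; rw [hΓ t]; simp
    rw [this, hrs.deriv]
  have e20 : M 2 0 = r * (-sin θ) := by
    rw [hM]
    show deriv (fun t => Γ t 2 0) θ = _
    have : (fun t => Γ t 2 0) = fun t => r * cos t := by
      funext t; rw [hΓ t]; simp
    rw [this, hrc.deriv]
  have e21 : M 2 1 = cos (8 * θ - 8 * θa) * 8 := by
    rw [hM]
    show deriv (fun t => Γ t 2 1) θ = _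
    have : (fun t => Γ t 2 1) = fun t => sin (8 * t - 8 * θa) := by
      funext t; rw [hΓ t]; simp
    rw [this, hsin8.deriv]
  set c8 := cos (8 * θ - 8 * θa) with hc8
  set c6 := cos (6 * θ - 6 * θa) with hc6
  have detA : (M.submatrix ![0, 1] ![0, 1]).det =
      r * (-sin θ) * (r * cos θ) + c8 * 8 * (c6 * 6) := by
    rw [Matrix.det_fin_two]
    simp only [Matrix.submatrix_apply]
    simp only [Matrix.cons_val_zero, Matrix.cons_val_one, Matrix.head_cons]
    rw [e00, e01, e10, e11]; ring
  have detB : (M.submatrix ![1, 2] ![0, 1]).det =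
      c6 * 6 * (c8 * 8) + r * cos θ * (r * (sin θ)) := by
    rw [Matrix.det_fin_two]
    simp only [Matrix.submatrix_apply]
    simp only [Matrix.cons_val_zero, Matrix.cons_val_one, Matrix.head_cons]
    rw [e10, e11, e20, e21]; ring
  by_cases hA : (M.submatrix ![0, 1] ![0, 1]).det ≠ 0
  · exact rank_ge_two_of_det_submatrix M _ _ hA
  push_neg at hA
  by_cases hB : (M.submatrix ![1, 2] ![0, 1]).det ≠ 0
  · exact rank_ge_two_of_det_submatrix M _ _ hB
  push_neg at hB
  exfalso
  rw [detA] at hA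
  rw [detB] at hB
  -- derive sin θ * cos θ = 0 and c8 * c6 = 0
  have hr2 : r ^ 2 = 1 + (1 + a) ^ 2 := by
    rw [hr, sq_sqrt]; positivity
  have hr2pos : (0:ℝ) < r ^ 2 := by rw [hr2]; positivity
  have hsum : 96 * (c8 * c6) = 0 := by linarith [hA, hB]
  have hdiff : 2 * (r ^ 2 * (sin θ * cos θ)) = 0 := by nlinarith [hA, hB]
  have hsc : sin θ * cos θ = 0 := by
    have := mul_eq_zero.mp hdiff
    rcases this with h | h
    · norm_num at h
    · rcases mul_eq_zero.mp h with h | h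
      · exact absurd h (ne_of_gt hr2pos)
      · exact h
  have hcc : c8 * c6 = 0 := by
    rcases mul_eq_zero.mp hsum with h | h
    · norm_num at h
    · exact h
  -- θ is a multiple of π/2
  have hθ2 : ∃ m : ℤ, θ = m * (π / 2) := by
    rcases mul_eq_zero.mp hsc with h | h
    · obtain ⟨n, hn⟩ := Real.sin_eq_zero_iff.mp h
      exact ⟨2 * n, by push_cast; linarith [hn]⟩
    · obtain ⟨k, hk⟩ := Real.cos_eq_zero_iff.mp h
      exact ⟨2 * k + 1, by push_cast; linarith [hk]⟩
  obtain ⟨m, hm⟩ := hθ2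
  rcases mul_eq_zero.mp hcc with h | h
  · obtain ⟨k, hk⟩ := Real.cos_eq_zero_iff.mp h
    apply hnot (24 * m - 3 * (2 * k + 1))
    have : 8 * θ - 8 * θa = (2 * k + 1) * π / 2 := hk
    rw [hm] at this
    push_cast
    field_simp at this ⊢
    linarith [this]
  · obtain ⟨k, hk⟩ := Real.cos_eq_zero_iff.mp h
    apply hnot (24 * m - 4 * (2 * k + 1))
    have : 6 * θ - 6 * θa = (2 * k + 1) * π / 2 := hk
    rw [hm] at this
    push_cast
    field_simp at this ⊢
    linarith [this]
end

section
/- Let C, K, ε > 0 and s₀ ∈ [0, 1/(2K)] with K ≥ max(2C, √(2C)(1+C)). Suppose (q_j), (s_j) are nonnegative sequences satisfying q_{j+1} ≤ Cε + C s_j² q_j and s_{j+1} ≤ s_j + C q_j^{1/2} for all j ≥ 0, with q₀ ≤ s₀². If q_j > Kε for all j = 0,...,j₀, then q_j ≤ (K s₀)^{2j} s₀² for all j = 0,...,j₀. Consequently, if q_j > Kε for all j ≥ 0 then q_j → 0 and hence ε = 0. -/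
open Filter

set_option maxHeartbeats 1000000 in
theorem iteration_scheme
    (C K ε : ℝ) (hC : 0 < C) (hK : 0 < K) (hε : 0 < ε)
    (hKge : K ≥ max (2 * C) (Real.sqrt (2 * C) * (1 + C)))
    (q s : ℕ → ℝ) (hq : ∀ j, 0 ≤ q j) (hs : ∀ j, 0 ≤ s j)
    (hs0 : s 0 ≤ 1 / (2 * K))
    (hrecq : ∀ j, q (j + 1) ≤ C * ε + C * (s j) ^ 2 * q j)
    (hrecs : ∀ j, s (j + 1) ≤ s j + C * Real.sqrt (q j))
    (hq0 : q 0 ≤ (s 0) ^ 2) :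
    (∀ j₀ : ℕ, (∀ j ≤ j₀, q j > K * ε) →
      ∀ j ≤ j₀, q j ≤ (K * s 0) ^ (2 * j) * (s 0) ^ 2) ∧
    ((∀ j, q j > K * ε) → Tendsto q atTop (nhds 0) ∧ ε = 0) := by
  obtain ⟨x, hxnn, hx, hK1⟩ : ∃ x : ℝ, 0 ≤ x ∧ x ^ 2 = 2 * C ∧ x * (1 + C) ≤ K :=
    ⟨Real.sqrt (2 * C), Real.sqrt_nonneg _, Real.sq_sqrt (by linarith),
      le_trans (le_max_right _ _) hKge⟩
  have hxpos : 0 < x := by nlinarith [hx]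
  have hxlt : x < 1 + C := by nlinarith [hx, sq_nonneg (x - 1 - C)]
  have hK2C : 2 * C < K := by
    linarith [mul_lt_mul_of_pos_left hxlt hxpos, hx, hK1]
  have hKsq : 2 * C * (1 + C) ^ 2 ≤ K ^ 2 := by
    have h := mul_le_mul hK1 hK1 (mul_nonneg hxnn (by linarith)) hK.le
    have hx2 : x ^ 2 * (1 + C) ^ 2 = 2 * C * (1 + C) ^ 2 := by rw [hx]
    linarith [h, hx2]
  have hKK : C * (1 + C) ≤ K * (K - 2 * C) := by
    have hA2 : (x * (1 + C)) ^ 2 = 2 * C * (1 + C) ^ 2 := by rw [mul_pow, hx]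
    have hx4 : C * (1 + C) * x ^ 2 = C * (1 + C) * (2 * C) := by rw [hx]
    linarith [mul_nonneg (sub_nonneg.mpr hK1)
        (by linarith [mul_nonneg hxnn (by linarith : (0:ℝ) ≤ 1 + C)] :
          (0:ℝ) ≤ K - 2 * C + x * (1 + C)),
      mul_nonneg (mul_nonneg hC.le (by linarith : (0:ℝ) ≤ 1 + C)) (sq_nonneg (x - 1)),
      hA2, hx4]
  have hKKpos : 0 < K * (K - 2 * C) := mul_pos hK (by linarith)
  obtain ⟨B, hBpos, hBK⟩ : ∃ B : ℝ, 0 < B ∧ B * (K * (K - 2 * C)) = C :=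
    ⟨C / (K * (K - 2 * C)), div_pos hC hKKpos, div_mul_cancel₀ _ (ne_of_gt hKKpos)⟩
  have hB1C : B * (1 + C) ≤ 1 := by
    have h : B * (1 + C) * (K * (K - 2 * C)) ≤ 1 * (K * (K - 2 * C)) := by
      have hBK2 : B * (K * (K - 2 * C)) * (1 + C) = C * (1 + C) := by rw [hBK]
      linarith [hBK2, hKK]
    exact le_of_mul_le_mul_right h hKKpos
  have hBle1 : B ≤ 1 := by linarith [hB1C, mul_pos hBpos hC]
  obtain ⟨t, htnn, ht2⟩ : ∃ t : ℝ, 0 ≤ t ∧ t ^ 2 = B :=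
    ⟨Real.sqrt B, Real.sqrt_nonneg _, Real.sq_sqrt hBpos.le⟩
  have hC25 : 25 * C ^ 2 ≤ 4 * (1 + C) ^ 3 := by
    nlinarith [mul_nonneg hC.le (sq_nonneg (2 * C - 3)), sq_nonneg (C - 2), hC.le,
      mul_nonneg hC.le (sq_nonneg (C - 2))]
  have hCt : C * t ≤ 2 / 5 * (1 + C) := by
    have h1 : C ^ 2 * (B * (1 + C)) ≤ C ^ 2 * 1 :=
      mul_le_mul_of_nonneg_left hB1C (sq_nonneg C)
    have e : (C * t) ^ 2 = C ^ 2 * B := by rw [mul_pow, ht2]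
    have h2 : C ^ 2 * B * (1 + C) ≤ (2 / 5 * (1 + C)) ^ 2 * (1 + C) := by
      linarith [h1, hC25]
    have h2' : C ^ 2 * B ≤ (2 / 5 * (1 + C)) ^ 2 :=
      le_of_mul_le_mul_right h2 (by linarith)
    have h3 : (C * t) ^ 2 ≤ (2 / 5 * (1 + C)) ^ 2 := by rw [e]; exact h2'
    exact le_of_pow_le_pow_left₀ two_ne_zero (by linarith) h3
  have hCtnn : 0 ≤ C * t := mul_nonneg hC.le htnn
  have hsig : C * (1 + C + C * t) ^ 2 ≤ K ^ 2 := by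
    have hb : 1 + C + C * t ≤ 7 / 5 * (1 + C) := by linarith
    have h10 : (1 + C + C * t) ^ 2 ≤ (7 / 5 * (1 + C)) ^ 2 :=
      pow_le_pow_left₀ (by linarith) hb 2
    have h11 : C * (1 + C + C * t) ^ 2 ≤ C * (7 / 5 * (1 + C)) ^ 2 :=
      mul_le_mul_of_nonneg_left h10 hC.le
    linarith [h11, hKsq, mul_nonneg hC.le (sq_nonneg (1 + C))]
  -- abbreviations
  have hs0nn : 0 ≤ s 0 := hs 0
  obtain ⟨s0, hs0eq⟩ : ∃ v : ℝ, s 0 = v := ⟨s 0, rfl⟩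
  rw [hs0eq] at hq0 hs0 hs0nn
  obtain ⟨a, hadef⟩ : ∃ v : ℝ, v = K * s0 := ⟨K * s0, rfl⟩
  have hann : 0 ≤ a := by rw [hadef]; exact mul_nonneg hK.le hs0nn
  have ha2 : a ≤ 1 / 2 := by
    rw [hadef]
    calc K * s0 ≤ K * (1 / (2 * K)) := mul_le_mul_of_nonneg_left hs0 hK.le
      _ = 1 / 2 := by field_simp
  have ha4 : a ^ 2 ≤ 1 / 4 := by
    nlinarith [mul_nonneg (by linarith : (0:ℝ) ≤ 1 / 2 - a) hann]
  obtain ⟨σ, hσdef⟩ : ∃ v : ℝ, v = (1 + C + C * t) * s0 := ⟨_, rfl⟩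
  have hσnn : 0 ≤ σ := by
    rw [hσdef]
    apply mul_nonneg _ hs0nn
    linarith
  have hσs0 : s0 ≤ σ := by
    rw [hσdef]
    have h1 : 0 ≤ C * t * s0 := mul_nonneg hCtnn hs0nn
    have h2 : 0 ≤ C * s0 := mul_nonneg hC.le hs0nn
    linarith [h1, h2]
  have hCσnn : 0 ≤ C * σ ^ 2 := mul_nonneg hC.le (sq_nonneg σ)
  have hCσ₂ : C * σ ^ 2 ≤ a ^ 2 := by
    have h := mul_le_mul_of_nonneg_right hsig (sq_nonneg s0)
    rw [hσdef, hadef]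
    have e : C * ((1 + C + C * t) * s0) ^ 2 = C * (1 + C + C * t) ^ 2 * s0 ^ 2 := by ring
    have e2 : (K * s0) ^ 2 = K ^ 2 * s0 ^ 2 := by ring
    rw [e, e2]
    exact h
  have hCσ : C * σ ^ 2 ≤ 1 / 4 := le_trans hCσ₂ ha4
  have ha2K : a ^ 2 = K ^ 2 * s0 ^ 2 := by rw [hadef]; ring
  have hcts0 : 0 ≤ C * t * s0 := mul_nonneg hCtnn hs0nn
  -- Part 1
  have part1 : ∀ j₀ : ℕ, (∀ j ≤ j₀, q j > K * ε) →
      ∀ j ≤ j₀, q j ≤ (K * s0) ^ (2 * j) * s0 ^ 2 := by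
    intro j₀ hQ
    -- key: from the affine bound and q > Kε derive the geometric bound
    have key : ∀ n : ℕ, n + 1 ≤ j₀ →
        q (n + 1) ≤ 2 * C * ε + C * s0 ^ 2 * (C * σ ^ 2) ^ n * s0 ^ 2 →
        q (n + 1) ≤ (t * a ^ (n + 1) * s0) ^ 2 := by
      intro n hn hqn
      have hQn := hQ (n + 1) hn
      have hKC2 : (0:ℝ) < K - 2 * C := by linarith
      have hepsE : (K - 2 * C) * ε < C * s0 ^ 2 * (C * σ ^ 2) ^ n * s0 ^ 2 := by
        linarith [hQn, hqn]
      have hpow : (C * σ ^ 2) ^ n ≤ (a ^ 2) ^ n := pow_le_pow_left₀ hCσnn hCσ₂ n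
      have h5 : q (n + 1) * ((K - 2 * C) * K)
          ≤ (t * a ^ (n + 1) * s0) ^ 2 * ((K - 2 * C) * K) := by
        have e1 : (t * a ^ (n + 1) * s0) ^ 2 * ((K - 2 * C) * K)
            = (a ^ 2) ^ n * (C * s0 ^ 2 * s0 ^ 2 * K ^ 2) := by
          have e2 : (t * a ^ (n + 1) * s0) ^ 2 * ((K - 2 * C) * K)
              = t ^ 2 * (K * (K - 2 * C)) * ((a ^ (n + 1)) ^ 2 * s0 ^ 2) := by ring
          rw [e2, ht2, hBK]
          rw [← pow_mul, mul_comm (n + 1) 2, pow_mul, pow_succ, ha2K]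
          ring
        rw [e1]
        have h6 : q (n + 1) * ((K - 2 * C) * K)
            ≤ (2 * C * ε + C * s0 ^ 2 * (C * σ ^ 2) ^ n * s0 ^ 2) * ((K - 2 * C) * K) :=
          mul_le_mul_of_nonneg_right hqn (mul_nonneg hKC2.le hK.le)
        have h7 : (C * σ ^ 2) ^ n * (C * s0 ^ 2 * s0 ^ 2 * K ^ 2)
            ≤ (a ^ 2) ^ n * (C * s0 ^ 2 * s0 ^ 2 * K ^ 2) :=
          mul_le_mul_of_nonneg_right hpow (mul_nonneg (mul_nonneg
            (mul_nonneg hC.le (sq_nonneg s0)) (sq_nonneg s0)) (sq_nonneg K))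
        have h8 : (K - 2 * C) * ε * (2 * C * K)
            ≤ C * s0 ^ 2 * (C * σ ^ 2) ^ n * s0 ^ 2 * (2 * C * K) :=
          mul_le_mul_of_nonneg_right hepsE.le
            (mul_nonneg (mul_nonneg (by norm_num : (0:ℝ) ≤ 2) hC.le) hK.le)
        linarith [h6, h7, h8]
      exact le_of_mul_le_mul_right h5 (mul_pos hKC2 hK)
    -- main induction
    have main : ∀ n : ℕ, n + 1 ≤ j₀ →
        q (n + 1) ≤ 2 * C * ε + C * s0 ^ 2 * (C * σ ^ 2) ^ n * s0 ^ 2 ∧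
        s (n + 1) ≤ σ - 2 * (C * t * s0) * a ^ (n + 1) := by
      intro n
      induction n with
      | zero =>
        intro _
        constructor
        · have h1 := hrecq 0
          rw [hs0eq] at h1
          have h2 : C * s0 ^ 2 * q 0 ≤ C * s0 ^ 2 * s0 ^ 2 :=
            mul_le_mul_of_nonneg_left hq0 (mul_nonneg hC.le (sq_nonneg s0))
          have hCε : 0 ≤ C * ε := mul_nonneg hC.le hε.le
          simp only [pow_zero]
          linarith
        · have h1 := hrecs 0
          rw [hs0eq] at h1
          have h2 : Real.sqrt (q 0) ≤ s0 := by
            calc Real.sqrt (q 0) ≤ Real.sqrt (s0 ^ 2) := Real.sqrt_le_sqrt hq0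
              _ = s0 := Real.sqrt_sq hs0nn
          have h3 : C * Real.sqrt (q 0) ≤ C * s0 := mul_le_mul_of_nonneg_left h2 hC.le
          have h4 : 2 * (C * t * s0) * a ≤ C * t * s0 := by
            have h7 := mul_le_mul_of_nonneg_left ha2
              (by linarith : (0:ℝ) ≤ 2 * (C * t * s0))
            linarith
          have h8 : a ^ 1 = a := pow_one a
          rw [hσdef, h8]
          linarith
      | succ n ih =>
        intro hn2
        have hn1 : n + 1 ≤ j₀ := by omega
        obtain ⟨ihq, ihs⟩ := ih hn1
        have hqB : q (n + 1) ≤ (t * a ^ (n + 1) * s0) ^ 2 := key n hn1 ihq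
        have htas : 0 ≤ t * a ^ (n + 1) * s0 :=
          mul_nonneg (mul_nonneg htnn (pow_nonneg hann _)) hs0nn
        have hsq : Real.sqrt (q (n + 1)) ≤ t * a ^ (n + 1) * s0 := by
          calc Real.sqrt (q (n + 1)) ≤ Real.sqrt ((t * a ^ (n + 1) * s0) ^ 2) :=
                Real.sqrt_le_sqrt hqB
            _ = t * a ^ (n + 1) * s0 := Real.sqrt_sq htas
        have hsn1 : s (n + 1) ≤ σ := by
          have h0 : 0 ≤ 2 * (C * t * s0) * a ^ (n + 1) :=
            mul_nonneg (by linarith) (pow_nonneg hann _)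
          linarith
        constructor
        · have h1 := hrecq (n + 1)
          have hs2 : (s (n + 1)) ^ 2 ≤ σ ^ 2 := pow_le_pow_left₀ (hs (n + 1)) hsn1 2
          have hCq : C * (s (n + 1)) ^ 2 * q (n + 1) ≤ C * σ ^ 2 * q (n + 1) :=
            mul_le_mul_of_nonneg_right (mul_le_mul_of_nonneg_left hs2 hC.le) (hq (n + 1))
          have hCq2 : C * σ ^ 2 * q (n + 1)
              ≤ C * σ ^ 2 * (2 * C * ε + C * s0 ^ 2 * (C * σ ^ 2) ^ n * s0 ^ 2) :=
            mul_le_mul_of_nonneg_left ihq hCσnn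
          have hE : C * s0 ^ 2 * (C * σ ^ 2) ^ (n + 1) * s0 ^ 2
              = (C * σ ^ 2) * (C * s0 ^ 2 * (C * σ ^ 2) ^ n * s0 ^ 2) := by
            rw [pow_succ]; ring
          have habs : C * σ ^ 2 * (2 * (C * ε)) ≤ C * ε := by
            have h9 := mul_le_mul_of_nonneg_right hCσ
              (mul_nonneg (by norm_num : (0:ℝ) ≤ 2) (mul_nonneg hC.le hε.le))
            linarith [h9, mul_nonneg hC.le hε.le]
          rw [hE]
          linarith [h1, hCq, hCq2, habs]
        · have h1 := hrecs (n + 1)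
          have h3 : C * Real.sqrt (q (n + 1)) ≤ C * (t * a ^ (n + 1) * s0) :=
            mul_le_mul_of_nonneg_left hsq hC.le
          have h4 : a ^ (n + 2) ≤ 1 / 2 * a ^ (n + 1) := by
            calc a ^ (n + 2) = a * a ^ (n + 1) := by ring
              _ ≤ 1 / 2 * a ^ (n + 1) :=
                mul_le_mul_of_nonneg_right ha2 (pow_nonneg hann _)
          have h5 : 2 * (C * t * s0) * a ^ (n + 2) ≤ C * t * s0 * a ^ (n + 1) := by
            have h6 := mul_le_mul_of_nonneg_left h4 (by linarith : (0:ℝ) ≤ 2 * (C * t * s0))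
            linarith [h6]
          linarith [h1, h3, ihs, h5]
    -- conclude part 1
    intro j hj
    cases j with
    | zero => simpa using hq0
    | succ n =>
      have hqB : q (n + 1) ≤ (t * a ^ (n + 1) * s0) ^ 2 :=
        key n hj ((main n hj).1)
      have e1 : (K * s0) ^ (2 * (n + 1)) * s0 ^ 2 = (a ^ (n + 1)) ^ 2 * s0 ^ 2 := by
        rw [← hadef, mul_comm 2 (n + 1), pow_mul]
      rw [e1]
      have e2 : (t * a ^ (n + 1) * s0) ^ 2 = B * ((a ^ (n + 1)) ^ 2 * s0 ^ 2) := by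
        rw [← ht2]; ring
      rw [e2] at hqB
      have hM : 0 ≤ (a ^ (n + 1)) ^ 2 * s0 ^ 2 :=
        mul_nonneg (sq_nonneg _) (sq_nonneg _)
      linarith [hqB, mul_nonneg (sub_nonneg.mpr hBle1) hM]
  constructor
  · rw [hs0eq]; exact part1
  intro hQall
  have hbd : ∀ j, q j ≤ (1 / 4 : ℝ) ^ j * s0 ^ 2 := by
    intro j
    have h1 := part1 j (fun i _ => hQall i) j le_rfl
    have h2 : (K * s0) ^ (2 * j) = (a ^ 2) ^ j := by
      rw [← hadef, pow_mul]
    rw [h2] at h1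
    have h3 : (a ^ 2) ^ j ≤ (1 / 4 : ℝ) ^ j := pow_le_pow_left₀ (sq_nonneg a) ha4 j
    calc q j ≤ (a ^ 2) ^ j * s0 ^ 2 := h1
      _ ≤ (1 / 4 : ℝ) ^ j * s0 ^ 2 := mul_le_mul_of_nonneg_right h3 (sq_nonneg s0)
  have htend : Tendsto (fun j : ℕ => (1 / 4 : ℝ) ^ j * s0 ^ 2) atTop (nhds 0) := by
    have h1 : Tendsto (fun j : ℕ => (1 / 4 : ℝ) ^ j) atTop (nhds 0) :=
      tendsto_pow_atTop_nhds_zero_of_lt_one (by norm_num) (by norm_num)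
    simpa using h1.mul_const (s0 ^ 2)
  have hq0' : Tendsto q atTop (nhds 0) := squeeze_zero hq hbd htend
  have hle : K * ε ≤ 0 := ge_of_tendsto' hq0' (fun j => (hQall j).le)
  have hF : False := by linarith [mul_pos hK hε]
  exact ⟨hq0', hF.elim⟩
end
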